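/- arXiv:2407.02045 — 4 statements merged into one kernel-verified Lean document; each statement's English description precedes it below -/
import Mathlib

section
/- For every real number s with 0 < s ≤ 1/2, we have ⌊1/s⌋ · s ≥ 2/3. (This is the key estimate for the 1-advice-bit algorithm achieving competitive ratio 3/2 for the online simple unbounded knapsack problem.) -/
/-! Write `n = ⌊1/s⌋`. Since `1/s < n + 1` we have `n s > 1 - s`, and `s ≤ 1/2` gives `n ≥ 2`,
so `n s ≥ 2 s`. Averaging, `n s > (2/3)(1 - s) + (1/3)(2 s) = 2/3`. -/

theorem one_sub_lt_floor_one_div_mul {s : ℝ} (hs : 0 < s) : 1 - s < (⌊1 / s⌋ : ℝ) * s := by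
  have h : 1 / s < ⌊1 / s⌋ + 1 := Int.lt_floor_add_one _
  rw [div_lt_iff₀ hs] at h
  linarith

theorem two_le_floor_one_div {s : ℝ} (hs : 0 < s) (hs2 : s ≤ 1 / 2) : 2 ≤ ⌊1 / s⌋ :=
  Int.le_floor.mpr (by rw [le_div_iff₀ hs]; push_cast; linarith)

theorem greedy_two_thirds (s : ℝ) (hs : 0 < s) (hs2 : s ≤ 1 / 2) :
    (⌊1 / s⌋ : ℝ) * s ≥ 2 / 3 := by
  have h_fill := one_sub_lt_floor_one_div_mul hs
  have h_two : (2 : ℝ) ≤ ⌊1 / s⌋ := by exact_mod_cast two_le_floor_one_div hs hs2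
  have h_twice : 2 * s ≤ (⌊1 / s⌋ : ℝ) * s := mul_le_mul_of_nonneg_right h_two hs.le
  linarith
end

section
/- The infimum over p₀, p₁ ≥ 0 with p₀ + p₁ ≤ 1 of max{1/p₀, (3/4)/(p₀/2 + (3/4)p₁), 1/(p₀/2 + (3/4)p₁ + 1 − p₀ − p₁)} equals 19/12 (with the convention that division by 0 gives ∞). -/
/-!
The three denominators `p₀`, `D₂ = p₀/2 + (3/4)p₁` and `D₃ = D₂ + 1 - p₀ - p₁` satisfy the linear
identity `p₀ + D₂ + 3 D₃ = 3`. Weighting the numerators `1, 3/4, 1` by `1, 1, 3` therefore bounds the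
largest ratio below by `(1 + 3/4 + 3) / 3 = 19/12`, and at `p₀ = 12/19`, `p₁ = 4/19` all three ratios
equal `19/12`.
-/

lemma weighted_mediant_le_max {a b c u v w x y z s : ℝ} (ha : 0 ≤ a) (hb : 0 ≤ b) (hc : 0 ≤ c)
    (hx : 0 < x) (hy : 0 < y) (hz : 0 < z) (hs : 0 < s) (hsum : a * x + b * y + c * z = s) :
    (a * u + b * v + c * w) / s ≤ max (u / x) (max (v / y) (w / z)) := by
  set M := max (u / x) (max (v / y) (w / z))
  have hu : u ≤ M * x := (div_le_iff₀ hx).1 (le_max_left _ _)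
  have hv : v ≤ M * y := (div_le_iff₀ hy).1 ((le_max_left _ _).trans (le_max_right _ _))
  have hw : w ≤ M * z := (div_le_iff₀ hz).1 ((le_max_right _ _).trans (le_max_right _ _))
  rw [div_le_iff₀ hs, ← hsum]
  calc a * u + b * v + c * w ≤ a * (M * x) + b * (M * y) + c * (M * z) := by gcongr
    _ = M * (a * x + b * y + c * z) := by ring

theorem minmax_nineteen_twelfths :
    (∀ p₀ p₁ : ℝ, 0 ≤ p₀ → 0 ≤ p₁ → p₀ + p₁ ≤ 1 → p₀ ≠ 0 →
      19 / 12 ≤ max (1 / p₀) (max ((3 / 4) / (p₀ / 2 + (3 / 4) * p₁))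
        (1 / (p₀ / 2 + (3 / 4) * p₁ + 1 - p₀ - p₁)))) ∧
    max (1 / (12 / 19 : ℝ)) (max ((3 / 4) / ((12 / 19 : ℝ) / 2 + (3 / 4) * (4 / 19)))
        (1 / ((12 / 19 : ℝ) / 2 + (3 / 4) * (4 / 19) + 1 - 12 / 19 - 4 / 19))) = 19 / 12 := by
  refine ⟨fun p₀ p₁ h₀ h₁ hsum hne => ?_, by norm_num⟩
  have hp₀ : 0 < p₀ := h₀.lt_of_ne' hne
  calc (19 / 12 : ℝ) = (1 * 1 + 1 * (3 / 4) + 3 * 1) / 3 := by norm_num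
    _ ≤ _ := weighted_mediant_le_max zero_le_one zero_le_one zero_le_three hp₀
      (by positivity) (by linarith) zero_lt_three (by ring)
end

section
/- (1/2)·(3 + ∫_{2/3}^{1} (1 + ln(2 − x))/x dx) < 1.7353. -/
/-!
Write `2 - x = 1 + u` with `u = 1 - x ∈ [0, 1/3]` and bound `log (1 + u)` by its Taylor polynomial
of degree 6 plus the remainder `3/2 · u⁷`. The resulting majorant of the integrand is `187/60 · x⁻¹`
plus a polynomial, so its integral is `187/60 · log (3/2)` plus an explicit rational. The series of
`artanh (1/5) = log (3/2) / 2` bounds `log (3/2)` closely enough to finish; the margin is about `10⁻⁴`.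
-/

open Real Set intervalIntegral

noncomputable def logOneAddMajorant (u : ℝ) : ℝ :=
  u - u ^ 2 / 2 + u ^ 3 / 3 - u ^ 4 / 4 + u ^ 5 / 5 - u ^ 6 / 6 + 3 / 2 * u ^ 7

lemma log_one_add_le_logOneAddMajorant {u : ℝ} (h0 : 0 ≤ u) (h1 : u ≤ 1 / 3) :
    log (1 + u) ≤ logOneAddMajorant u := by
  have hu : |-u| < 1 := by rw [abs_neg, abs_of_nonneg h0]; linarith
  have hTaylor := (abs_le.1 (abs_log_sub_add_sum_range_le hu 6)).2
  rw [abs_neg, abs_of_nonneg h0, sub_neg_eq_add] at hTaylor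
  have hRemainder : u ^ 7 / (1 - u) ≤ 3 / 2 * u ^ 7 := by
    rw [div_le_iff₀ (by linarith)]
    nlinarith [mul_nonneg (pow_nonneg h0 7) (sub_nonneg.2 h1)]
  simp only [Finset.sum_range_succ, Finset.sum_range_zero] at hTaylor
  norm_num [logOneAddMajorant] at hTaylor ⊢
  linarith

lemma log_three_halves_le : log (3 / 2) ≤ 0.405467 := by
  have h := log_div_le_sum_range_add (x := 1 / 5) (by norm_num) (by norm_num) 4
  norm_num [Finset.sum_range_succ] at h
  linarith

lemma integral_one_add_logOneAddMajorant_div :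
    ∫ x in (2 / 3 : ℝ)..1, (1 + logOneAddMajorant (1 - x)) / x
      = 187 / 60 * log (3 / 2) - 14571299 / 18370800 := by
  have hExpand : EqOn (fun x : ℝ ↦ (1 + logOneAddMajorant (1 - x)) / x)
      (fun x ↦ 187 / 60 * x⁻¹ + (-21 / 2 + 30 * x - 101 / 2 * x ^ 2 + 203 / 4 * x ^ 3
        - 307 / 10 * x ^ 4 + 31 / 3 * x ^ 5 - 3 / 2 * x ^ 6)) (uIcc (2 / 3) 1) := by
    intro x hx
    have hx0 : x ≠ 0 := by grind [mem_uIcc]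
    simp only [logOneAddMajorant]
    field_simp
    ring
  have hInv : IntervalIntegrable (fun x : ℝ ↦ 187 / 60 * x⁻¹) MeasureTheory.volume (2 / 3) 1 :=
    ContinuousOn.intervalIntegrable (by fun_prop (disch := grind [mem_uIcc]))
  rw [integral_congr hExpand, integral_add hInv (Continuous.intervalIntegrable (by fun_prop) _ _),
    integral_const_mul, integral_inv_of_pos (by norm_num) (by norm_num)]
  simp (disch := exact Continuous.intervalIntegrable (by fun_prop) _ _) only
    [integral_sub, integral_add, integral_const_mul, integral_pow, integral_const]
  rw [integral_const_mul, integral_id]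
  norm_num
  ring

theorem competitive_ratio_bound :
    (1 / 2) * (3 + ∫ x in (2 / 3 : ℝ)..1, (1 + Real.log (2 - x)) / x) < 1.7353 := by
  have hIntegrand : ∀ x ∈ Icc (2 / 3 : ℝ) 1,
      (1 + log (2 - x)) / x ≤ (1 + logOneAddMajorant (1 - x)) / x := by
    rintro x ⟨hx₁, hx₂⟩
    have hLog := log_one_add_le_logOneAddMajorant (u := 1 - x) (by linarith) (by linarith)
    rw [show (1 : ℝ) + (1 - x) = 2 - x by ring] at hLog
    gcongr
  calc (1 / 2) * (3 + ∫ x in (2 / 3 : ℝ)..1, (1 + log (2 - x)) / x)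
      ≤ (1 / 2) * (3 + ∫ x in (2 / 3 : ℝ)..1, (1 + logOneAddMajorant (1 - x)) / x) := by
        gcongr
        refine integral_mono_on (by norm_num) ?_ ?_ hIntegrand <;>
          refine ContinuousOn.intervalIntegrable ?_
        · fun_prop (disch := grind [mem_uIcc])
        · unfold logOneAddMajorant; fun_prop (disch := grind [mem_uIcc])
    _ = (1 / 2) * (3 + (187 / 60 * log (3 / 2) - 14571299 / 18370800)) := by
        rw [integral_one_add_logOneAddMajorant_div]
    _ < 1.7353 := by linarith [log_three_halves_le]
end

section
/- Let a > 0 and b ≥ 0, set f(x) = a·(1 + ln(2 − x))/(2x) for 2/3 < x ≤ 1, and let g(ξ) = ξ / ((2a)/3 + (2b)/3 + ∫_{2/3}^{ξ} x·f(x) dx) for 2/3 ≤ ξ ≤ 1. Then g is monotonically increasing on [2/3, 1]. -/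
theorem g_increasing (a b : ℝ) (ha : 0 < a) (hb : 0 ≤ b) :
    MonotoneOn (fun ξ : ℝ => ξ /
      ((2 * a) / 3 + (2 * b) / 3 +
        ∫ x in (2 / 3 : ℝ)..ξ, x * (a * (1 + Real.log (2 - x)) / (2 * x))))
      (Set.Icc (2 / 3 : ℝ) 1) := by
  set F : ℝ → ℝ := fun x => x * (a * (1 + Real.log (2 - x)) / (2 * x)) with hF
  -- pointwise bounds on F on [2/3, 1]
  have hFbound : ∀ x ∈ Set.Icc (2/3 : ℝ) 1, a / 2 ≤ F x ∧ F x ≤ 2 * a / 3 := by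
    intro x hx
    obtain ⟨hx1, hx2⟩ := hx
    have hxne : x ≠ 0 := by linarith
    have hFx : F x = a * (1 + Real.log (2 - x)) / 2 := by
      simp only [hF]
      rw [mul_div_assoc', mul_comm x, mul_div_mul_right _ _ hxne]
    have hpos : (0 : ℝ) < 2 - x := by linarith
    have hlog0 : 0 ≤ Real.log (2 - x) := Real.log_nonneg (by linarith)
    have hlog1 : Real.log (2 - x) ≤ 1/3 := by
      have := Real.log_le_sub_one_of_pos hpos
      linarith
    constructor <;> rw [hFx] <;> nlinarith
  -- continuity, hence integrability on subintervals
  have hcont : ContinuousOn F (Set.Icc (2/3 : ℝ) 1) := by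
    apply ContinuousOn.mul continuousOn_id
    apply ContinuousOn.div
    · apply ContinuousOn.mul continuousOn_const
      apply ContinuousOn.add continuousOn_const
      apply ContinuousOn.log (by fun_prop)
      intro x hx; obtain ⟨_, hx2⟩ := hx; intro h; linarith [h]
    · fun_prop
    · intro x hx; obtain ⟨hx1, _⟩ := hx; intro h; linarith [h]
  have hint : ∀ s t : ℝ, s ∈ Set.Icc (2/3 : ℝ) 1 → t ∈ Set.Icc (2/3 : ℝ) 1 → s ≤ t →
      IntervalIntegrable F MeasureTheory.volume s t := by
    intro s t hs ht hst
    apply ContinuousOn.intervalIntegrable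
    rw [Set.uIcc_of_le hst]
    exact hcont.mono (Set.Icc_subset_Icc hs.1 ht.2)
  intro ξ₁ h₁ ξ₂ h₂ hle
  simp only
  have hsub1 : Set.Icc (2/3 : ℝ) ξ₁ ⊆ Set.Icc (2/3 : ℝ) 1 := Set.Icc_subset_Icc le_rfl h₁.2
  have hsub2 : Set.Icc ξ₁ ξ₂ ⊆ Set.Icc (2/3 : ℝ) 1 := Set.Icc_subset_Icc h₁.1 h₂.2
  have hm : (2/3 : ℝ) ∈ Set.Icc (2/3 : ℝ) 1 := by constructor <;> norm_num
  have hint1 := hint _ _ hm h₁ h₁.1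
  have hint2 := hint _ _ h₁ h₂ hle
  -- integral bounds
  have hI1low : (ξ₁ - 2/3) * (a/2) ≤ ∫ x in (2/3 : ℝ)..ξ₁, F x := by
    have h' := intervalIntegral.integral_mono_on (μ := MeasureTheory.volume) h₁.1
      (intervalIntegrable_const (c := a/2)) hint1
      (fun x hx => (hFbound x (hsub1 hx)).1)
    simp at h'; linarith
  have hJhigh : (∫ x in ξ₁..ξ₂, F x) ≤ (ξ₂ - ξ₁) * (2 * a / 3) := by
    have h' := intervalIntegral.integral_mono_on (μ := MeasureTheory.volume) hle
      hint2 (intervalIntegrable_const (c := 2 * a / 3))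
      (fun x hx => (hFbound x (hsub2 hx)).2)
    simp at h'; linarith
  have hsplit : (∫ x in (2/3 : ℝ)..ξ₂, F x)
      = (∫ x in (2/3 : ℝ)..ξ₁, F x) + ∫ x in ξ₁..ξ₂, F x :=
    (intervalIntegral.integral_add_adjacent_intervals hint1 hint2).symm
  set I₁ := ∫ x in (2/3 : ℝ)..ξ₁, F x
  set J := ∫ x in ξ₁..ξ₂, F x
  have hJlow : (ξ₂ - ξ₁) * (a/2) ≤ J := by
    have h' := intervalIntegral.integral_mono_on (μ := MeasureTheory.volume) hle
      (intervalIntegrable_const (c := a/2)) hint2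
      (fun x hx => (hFbound x (hsub2 hx)).1)
    simp at h'; linarith
  have hI1nonneg : 0 ≤ I₁ := by nlinarith [h₁.1]
  have hJnonneg : 0 ≤ J := by nlinarith [hle]
  have hD1 : 0 < (2 * a) / 3 + (2 * b) / 3 + I₁ := by linarith
  have hD2 : 0 < (2 * a) / 3 + (2 * b) / 3 + ((∫ x in (2/3 : ℝ)..ξ₂, F x)) := by
    rw [hsplit]; linarith
  have hxpos : (0:ℝ) ≤ ξ₁ := by linarith [h₁.1]
  have key : ξ₁ * ((ξ₂ - ξ₁) * (2 * a / 3)) ≤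
      (ξ₂ - ξ₁) * ((2 * a) / 3 + (2 * b) / 3 + (ξ₁ - 2/3) * (a/2)) := by
    nlinarith [mul_nonneg (sub_nonneg.2 hle) hb,
      mul_nonneg (sub_nonneg.2 hle) (mul_nonneg ha.le (by linarith [h₁.2] : (0:ℝ) ≤ 2 - ξ₁))]
  rw [div_le_div_iff₀ hD1 hD2, hsplit]
  nlinarith [key, mul_le_mul_of_nonneg_left hJhigh hxpos,
    mul_le_mul_of_nonneg_left hI1low (sub_nonneg.2 hle)]
end
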